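/- arXiv:2407.00515 — 6 statements merged into one kernel-verified Lean document; each statement's English description precedes it below -/
import Mathlib

section
/- Let N ≥ 2 be an integer, A a commutative ring, and q ∈ A invertible. Then in M_N(A) ⊗ M_N(A) with entries in the Laurent polynomial ring A[x, x⁻¹] one has the unitarity-type identity R̄₁₂(x) · R̄₂₁(x⁻¹) = (1 − q⁻²x)(1 − q⁻²x⁻¹) · Id, where R̄₂₁(x) = P R̄(x) P with P = Σ_{i,j} e_{ij}⊗e_{ji} the permutation operator. -/
/-!
Writing `P` for the flip `(i, j) ↦ (j, i)`, the matrix `R̄(x)` has the shape `D_a + D_b P` with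
diagonal `D_a`, `D_b`. Since `P² = 1` and `P D_d = D_{d ∘ P} P`, matrices of this shape are stable
under conjugation by `P` and under products, so `R̄₁₂(x) R̄₂₁(x⁻¹)` is again of this shape and
the identity reduces to two scalar identities for each index `(i, j)`; both hold because
`x x⁻¹ = 1`.
-/

/-- The trigonometric `R`-matrix of type `A`; the parameter `t` stands for `q⁻¹`,
on which alone the matrix depends. -/
def Rbar (N : ℕ) {R : Type*} [CommRing R] (t x : R) :
    Matrix (Fin N × Fin N) (Fin N × Fin N) R := fun p r =>
  (if p.1 = r.1 ∧ p.2 = r.2 then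
      (if p.1 = p.2 then 1 - t ^ 2 * x else t * (1 - x)) else 0)
  + (if p.1 ≠ p.2 ∧ p.1 = r.2 ∧ p.2 = r.1 then
      (if p.2 < p.1 then (1 - t ^ 2) * x else 1 - t ^ 2) else 0)

/-- The permutation operator `P = Σ_{i,j} e_{ij} ⊗ e_{ji}` on `M_N ⊗ M_N`. -/
def Pmat (N : ℕ) (R : Type*) [CommRing R] :
    Matrix (Fin N × Fin N) (Fin N × Fin N) R := fun p r =>
  if p.1 = r.2 ∧ p.2 = r.1 then 1 else 0

open Matrix Equiv

section DiagonalPlusPermutation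

variable {ι R : Type*} [Fintype ι] [DecidableEq ι] [CommRing R]

/-- The matrix with entry `a i` at `(i, i)` and `b i` at `(i, σ i)` (added up when `σ i = i`). -/
def diagPerm (σ : Perm ι) (a b : ι → R) : Matrix ι ι R :=
  diagonal a + diagonal b * σ.permMatrix R

lemma permMatrix_mul_diagonal (σ : Perm ι) (d : ι → R) :
    σ.permMatrix R * diagonal d = diagonal (d ∘ σ) * σ.permMatrix R := by
  ext i j
  rw [PEquiv.toMatrix_toPEquiv_mul, PEquiv.mul_toMatrix_toPEquiv]
  simp only [submatrix_apply, id, diagonal_apply, Function.comp_apply, Equiv.eq_symm_apply]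

lemma permMatrix_mul_self {σ : Perm ι} (hσ : Function.Involutive σ) :
    σ.permMatrix R * σ.permMatrix R = 1 := by
  rw [← permMatrix_mul, show σ * σ = 1 from Perm.ext hσ, permMatrix_one]

variable {σ : Perm ι}

lemma permMatrix_mul_diagPerm_mul_permMatrix (hσ : Function.Involutive σ) (a b : ι → R) :
    σ.permMatrix R * diagPerm σ a b * σ.permMatrix R = diagPerm σ (a ∘ σ) (b ∘ σ) := by
  simp only [diagPerm, mul_add, add_mul, ← mul_assoc, permMatrix_mul_diagonal]
  simp only [mul_assoc, permMatrix_mul_self hσ, mul_one]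

lemma diagPerm_mul_diagPerm (hσ : Function.Involutive σ) (a b c e : ι → R) :
    diagPerm σ a b * diagPerm σ c e =
      diagPerm σ (a * c + b * (e ∘ σ)) (a * e + b * (c ∘ σ)) := by
  simp only [diagPerm, mul_add, add_mul, ← mul_assoc, diagonal_mul_diagonal]
  simp only [mul_assoc, permMatrix_mul_diagonal, permMatrix_mul_self hσ]
  simp only [mul_one, ← mul_assoc, diagonal_mul_diagonal, Pi.add_def, Pi.mul_def,
    Function.comp_apply, ← diagonal_add, add_mul]
  abel

lemma diagPerm_apply (σ : Perm ι) (a b : ι → R) (i j : ι) :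
    diagPerm σ a b i j = (if i = j then a i else 0) + (if σ i = j then b i else 0) := by
  simp [diagPerm, PEquiv.mul_toMatrix_toPEquiv, diagonal_apply, Equiv.eq_symm_apply]

lemma diagPerm_const_zero (σ : Perm ι) (c : R) : diagPerm σ (fun _ => c) 0 = c • 1 := by
  simp [diagPerm, smul_one_eq_diagonal]

end DiagonalPlusPermutation

namespace Rbar

variable {N : ℕ} {R : Type*} [CommRing R]

def diagCoeff (t x : R) (p : Fin N × Fin N) : R :=
  if p.1 = p.2 then 1 - t ^ 2 * x else t * (1 - x)

def swapCoeff (t x : R) (p : Fin N × Fin N) : R :=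
  if p.1 = p.2 then 0 else if p.2 < p.1 then (1 - t ^ 2) * x else 1 - t ^ 2

lemma diagCoeff_mul_add_swapCoeff_mul {t x y : R} (hxy : x * y = 1) (p : Fin N × Fin N) :
    diagCoeff t x p * diagCoeff t y p.swap + swapCoeff t x p * swapCoeff t y p =
      (1 - t ^ 2 * x) * (1 - t ^ 2 * y) := by
  obtain ⟨i, j⟩ := p
  rcases lt_trichotomy i j with h | rfl | h
  · simp only [diagCoeff, swapCoeff, Prod.swap_prod_mk, h.ne, h.ne', h.not_gt, ↓reduceIte]
    linear_combination (t ^ 2 - t ^ 4) * hxy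
  · simp [diagCoeff, swapCoeff]
  · simp only [diagCoeff, swapCoeff, Prod.swap_prod_mk, h.ne, h.ne', h, ↓reduceIte]
    linear_combination (1 - t ^ 2) * hxy

lemma diagCoeff_mul_swapCoeff_add_swapCoeff_mul {t x y : R} (hxy : x * y = 1)
    (p : Fin N × Fin N) :
    diagCoeff t x p * swapCoeff t y p.swap + swapCoeff t x p * diagCoeff t y p = 0 := by
  obtain ⟨i, j⟩ := p
  rcases lt_trichotomy i j with h | rfl | h
  · simp only [diagCoeff, swapCoeff, Prod.swap_prod_mk, h.ne, h.ne', h, h.not_gt, ↓reduceIte]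
    linear_combination (t ^ 3 - t) * hxy
  · simp [diagCoeff, swapCoeff]
  · simp only [diagCoeff, swapCoeff, Prod.swap_prod_mk, h.ne, h.ne', h, h.not_gt, ↓reduceIte]
    linear_combination (t ^ 3 - t) * hxy

end Rbar

lemma Rbar_eq_diagPerm (N : ℕ) {R : Type*} [CommRing R] (t x : R) :
    Rbar N t x =
      diagPerm (prodComm (Fin N) (Fin N)) (Rbar.diagCoeff t x) (Rbar.swapCoeff t x) := by
  ext ⟨i, j⟩ ⟨k, l⟩
  simp only [Rbar, diagPerm_apply, Rbar.diagCoeff, Rbar.swapCoeff, Prod.mk.injEq,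
    prodComm_apply, Prod.swap_prod_mk]
  congr 1
  by_cases hij : i = j <;> simp [hij, and_comm]

lemma Pmat_eq_permMatrix (N : ℕ) (R : Type*) [CommRing R] :
    Pmat N R = Perm.permMatrix R (prodComm (Fin N) (Fin N)) := by
  ext ⟨i, j⟩ ⟨k, l⟩
  simp [Pmat, and_comm]

theorem Rbar_mul_Pmat_mul_Rbar_mul_Pmat {N : ℕ} {R : Type*} [CommRing R] {t x y : R}
    (hxy : x * y = 1) :
    Rbar N t x * (Pmat N R * Rbar N t y * Pmat N R) =
      ((1 - t ^ 2 * x) * (1 - t ^ 2 * y)) • (1 : Matrix (Fin N × Fin N) (Fin N × Fin N) R) := by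
  have hswap : Function.Involutive (prodComm (Fin N) (Fin N)) := Prod.swap_swap
  rw [Rbar_eq_diagPerm, Rbar_eq_diagPerm, Pmat_eq_permMatrix,
    permMatrix_mul_diagPerm_mul_permMatrix hswap, diagPerm_mul_diagPerm hswap,
    ← diagPerm_const_zero (prodComm (Fin N) (Fin N))]
  congr 1 <;> funext p
  · exact Rbar.diagCoeff_mul_add_swapCoeff_mul hxy p
  · exact Rbar.diagCoeff_mul_swapCoeff_add_swapCoeff_mul hxy p

theorem Rbar_unitarity_general (N : ℕ)
    (A : Type*) [CommRing A] (q : Aˣ) :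
    let L := LaurentPolynomial A
    let x : L := LaurentPolynomial.T 1
    let xinv : L := LaurentPolynomial.T (-1)
    let t : L := LaurentPolynomial.C ((q⁻¹ : Aˣ) : A)
    Rbar N t x * (Pmat N L * Rbar N t xinv * Pmat N L) =
      ((1 - t ^ 2 * x) * (1 - t ^ 2 * xinv)) •
        (1 : Matrix (Fin N × Fin N) (Fin N × Fin N) L) := by
  intro L x xinv t
  have hx : x * xinv = 1 := by
    rw [← LaurentPolynomial.T_add, add_neg_cancel, LaurentPolynomial.T_zero]
  exact Rbar_mul_Pmat_mul_Rbar_mul_Pmat hx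

/-- The unitarity-type identity
`R̄₁₂(x) R̄₂₁(x⁻¹) = (1 − q⁻²x)(1 − q⁻²x⁻¹) · Id` in
`M_N(A[x,x⁻¹]) ⊗ M_N(A[x,x⁻¹])`, where `R̄₂₁(x) = P R̄(x) P`. -/
theorem Rbar_unitarity (N : ℕ) (hN : 2 ≤ N)
    (A : Type*) [CommRing A] (q : Aˣ) :
    let L := LaurentPolynomial A
    let x : L := LaurentPolynomial.T 1
    let xinv : L := LaurentPolynomial.T (-1)
    let t : L := LaurentPolynomial.C ((q⁻¹ : Aˣ) : A)
    Rbar N t x * (Pmat N L * Rbar N t xinv * Pmat N L) =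
      ((1 - t ^ 2 * x) * (1 - t ^ 2 * xinv)) •
        (1 : Matrix (Fin N × Fin N) (Fin N × Fin N) L) :=
  Rbar_unitarity_general N A q
end

section
/- Let N ≥ 2 be an integer, A a commutative ring, and q ∈ A invertible. Then in M_N(A) ⊗ M_N(A) ⊗ M_N(A) the q-deformed permutation operator satisfies the braid relation P^h₁₂ P^h₂₃ P^h₁₂ = P^h₂₃ P^h₁₂ P^h₂₃, where the subscripts indicate the pair of tensor legs on which P^h acts. -/
/-- The `q`-deformed permutation operator
`P^h = Σ_i e_{ii}⊗e_{ii} + q Σ_{i>j} e_{ij}⊗e_{ji} + q⁻¹ Σ_{i<j} e_{ij}⊗e_{ji}`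
on `M_N ⊗ M_N`; here `qq` stands for `q` and `qi` for `q⁻¹`. -/
def Ph (N : ℕ) {R : Type*} [CommRing R] (qq qi : R) :
    Matrix (Fin N × Fin N) (Fin N × Fin N) R := fun p r =>
  if p.1 = r.2 ∧ p.2 = r.1 then
    (if p.1 = p.2 then 1 else if p.2 < p.1 then qq else qi)
  else 0

/-- Copy of a two-leg operator acting on legs 1 and 2 of the threefold tensor
product `M_N ⊗ M_N ⊗ M_N`. -/
def leg12 {N : ℕ} {R : Type*} [CommRing R]
    (M : Matrix (Fin N × Fin N) (Fin N × Fin N) R) :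
    Matrix (Fin N × Fin N × Fin N) (Fin N × Fin N × Fin N) R := fun p r =>
  M (p.1, p.2.1) (r.1, r.2.1) * (if p.2.2 = r.2.2 then 1 else 0)

/-- Copy of a two-leg operator acting on legs 2 and 3. -/
def leg23 {N : ℕ} {R : Type*} [CommRing R]
    (M : Matrix (Fin N × Fin N) (Fin N × Fin N) R) :
    Matrix (Fin N × Fin N × Fin N) (Fin N × Fin N × Fin N) R := fun p r =>
  M (p.2.1, p.2.2) (r.2.1, r.2.2) * (if p.1 = r.1 then 1 else 0)


lemma leg12_Ph {N : ℕ} {R : Type*} [CommRing R] (qq qi : R)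
    (p k : Fin N × Fin N × Fin N) :
    leg12 (Ph N qq qi) p k =
      if k = (p.2.1, p.1, p.2.2) then
        (if p.1 = p.2.1 then 1 else if p.2.1 < p.1 then qq else qi) else 0 := by
  obtain ⟨k1, k2, k3⟩ := k
  simp only [leg12, Ph, Prod.mk.injEq]
  split_ifs with h1 h2 h3 h4 h5 h6 h7 h8 h9 h10 h11 h12 <;> simp_all <;> try ring
  exact absurd (h1.1.symm.trans h1.2).symm h4

lemma leg23_Ph {N : ℕ} {R : Type*} [CommRing R] (qq qi : R)
    (p k : Fin N × Fin N × Fin N) :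
    leg23 (Ph N qq qi) p k =
      if k = (p.1, p.2.2, p.2.1) then
        (if p.2.1 = p.2.2 then 1 else if p.2.2 < p.2.1 then qq else qi) else 0 := by
  obtain ⟨k1, k2, k3⟩ := k
  simp only [leg23, Ph, Prod.mk.injEq]
  split_ifs with h1 h2 h3 h4 h5 h6 h7 h8 h9 h10 h11 h12 <;> simp_all <;> try ring
  exact absurd (h1.1.symm.trans h1.2).symm h4

lemma mul12_Ph {N : ℕ} {R : Type*} [CommRing R] (qq qi : R)
    (X : Matrix (Fin N × Fin N × Fin N) (Fin N × Fin N × Fin N) R)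
    (p r : Fin N × Fin N × Fin N) :
    (leg12 (Ph N qq qi) * X) p r =
      (if p.1 = p.2.1 then 1 else if p.2.1 < p.1 then qq else qi)
        * X (p.2.1, p.1, p.2.2) r := by
  rw [Matrix.mul_apply]
  simp [leg12_Ph, ite_mul, Finset.sum_ite_eq]

lemma mul23_Ph {N : ℕ} {R : Type*} [CommRing R] (qq qi : R)
    (X : Matrix (Fin N × Fin N × Fin N) (Fin N × Fin N × Fin N) R)
    (p r : Fin N × Fin N × Fin N) :
    (leg23 (Ph N qq qi) * X) p r =
      (if p.2.1 = p.2.2 then 1 else if p.2.2 < p.2.1 then qq else qi)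
        * X (p.1, p.2.2, p.2.1) r := by
  rw [Matrix.mul_apply]
  simp [leg23_Ph, ite_mul, Finset.sum_ite_eq]

/-- The braid relation `P^h₁₂ P^h₂₃ P^h₁₂ = P^h₂₃ P^h₁₂ P^h₂₃` in
`M_N(A) ⊗ M_N(A) ⊗ M_N(A)`. -/
theorem Ph_braid (N : ℕ) (hN : 2 ≤ N) (A : Type*) [CommRing A] (q : Aˣ) :
    leg12 (Ph N ((q : A)) ((q⁻¹ : Aˣ) : A)) * leg23 (Ph N ((q : A)) ((q⁻¹ : Aˣ) : A)) *
        leg12 (Ph N ((q : A)) ((q⁻¹ : Aˣ) : A)) =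
      leg23 (Ph N ((q : A)) ((q⁻¹ : Aˣ) : A)) * leg12 (Ph N ((q : A)) ((q⁻¹ : Aˣ) : A)) *
        leg23 (Ph N ((q : A)) ((q⁻¹ : Aˣ) : A)) := by
  ext ⟨a, b, c⟩ ⟨x, y, z⟩
  rw [Matrix.mul_assoc, Matrix.mul_assoc, mul12_Ph, mul23_Ph, leg12_Ph,
    mul23_Ph, mul12_Ph, leg23_Ph]
  simp only
  split_ifs <;> ring
end

section
/- Let N ≥ 2 and n ≥ 2 be integers, A a commutative ring, and q ∈ A invertible. Then there is a (unique) group homomorphism from the symmetric group 𝔖_n to the group of invertible elements of the n-fold tensor product M_N(A)^{⊗n} sending each simple transposition σ_i = (i, i+1) to P^h_{i,i+1}, the copy of the h-permutation operator P^h acting on tensor legs i and i+1. -/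
/-- Copy of a two-leg operator acting on legs `i` and `j` of the `n`-fold tensor
product `M_N(R)^{⊗n}`, realized as matrices indexed by tuples `Fin n → Fin N`. -/
def leg2 {N : ℕ} (n : ℕ) {R : Type*} [CommRing R]
    (M : Matrix (Fin N × Fin N) (Fin N × Fin N) R) (i j : Fin n) :
    Matrix (Fin n → Fin N) (Fin n → Fin N) R := fun p r =>
  M (p i, p j) (r i, r j) *
    ∏ k ∈ Finset.univ \ {i, j}, (if p k = r k then (1 : R) else 0)

open Equiv Finset

lemma swap_lt_swap_of_covBy {α : Type*} [LinearOrder α] {a b u v : α} (hab : a ⋖ b)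
    (huv : u < v) (hne : (u, v) ≠ (a, b)) : swap a b u < swap a b v := by
  obtain ⟨hlt, hcov⟩ := hab
  simp only [swap_apply_def]
  grind

lemma eq_comp_swap_iff {α β : Type*} [Fintype α] [DecidableEq α] {p r : α → β} {a b : α} :
    p = r ∘ swap a b ↔ (p a = r b ∧ p b = r a) ∧ ∀ k ∈ univ \ {a, b}, p k = r k := by
  simp only [funext_iff, Function.comp_apply, mem_sdiff, mem_insert, mem_singleton, mem_univ,
    true_and]
  refine ⟨fun h => ⟨⟨by simpa using h a, by simpa using h b⟩, fun k hk => ?_⟩, fun h k => ?_⟩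
  · rw [h k, swap_apply_of_ne_of_ne] <;> tauto
  · rcases eq_or_ne k a with rfl | hka
    · simpa using h.1.1
    rcases eq_or_ne k b with rfl | hkb
    · simpa using h.1.2
    rw [swap_apply_of_ne_of_ne hka hkb]
    exact h.2 k (by tauto)

section InversionWeight

variable {R V : Type*} [CommRing R] {n : ℕ}

/-- `Perm.finPairsLT n` consists of the pairs `⟨i, j⟩` with `j < i`, so the factors `≠ 1` are
indexed by the inversions of `σ`. -/
def inversionWeight (w : V → V → R) (σ : Perm (Fin n)) (r : Fin n → V) : R :=
  ∏ x ∈ Perm.finPairsLT n, if σ x.1 < σ x.2 then w (r (σ x.1)) (r (σ x.2)) else 1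

@[simp]
lemma inversionWeight_one (w : V → V → R) (r : Fin n → V) : inversionWeight w 1 r = 1 :=
  prod_eq_one fun _ hx => if_neg (Perm.mem_finPairsLT.1 hx).not_gt

lemma inversionWeight_mul {w : V → V → R} (hw : ∀ a b, w a b * w b a = 1)
    (σ τ : Perm (Fin n)) (r : Fin n → V) :
    inversionWeight w (τ * σ) r = inversionWeight w σ (r ∘ τ) * inversionWeight w τ r := by
  let F : (Σ _ : Fin n, Fin n) → R := fun y =>
    if τ y.1 < τ y.2 then w (r (τ y.1)) (r (τ y.2)) else 1
  -- As in `Perm.signAux_mul`: re-sorting the pairs `(σ i, σ j)` permutes `finPairsLT n`.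
  have reindex : ∏ x ∈ Perm.finPairsLT n, F (Perm.signBijAux σ x) = inversionWeight w τ r :=
    prod_nbij _ Perm.signBijAux_mem Perm.signBijAux_injOn Perm.signBijAux_surj fun _ _ => rfl
  rw [← reindex, inversionWeight, inversionWeight, ← prod_mul_distrib]
  refine prod_congr rfl fun x hx => ?_
  have hσ : σ x.1 ≠ σ x.2 := σ.injective.ne (Perm.mem_finPairsLT.1 hx).ne'
  have hτσ : τ (σ x.1) ≠ τ (σ x.2) := τ.injective.ne hσ
  simp only [Perm.signBijAux, Perm.mul_apply, Function.comp_apply]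
  rcases hσ.lt_or_gt with h | h <;> rcases hτσ.lt_or_gt with h' | h' <;>
    simp [F, h, h', h.not_gt, h'.not_gt, hw]

lemma inversionWeight_swap (w : V → V → R) {a b : Fin n} (hab : a ⋖ b) (r : Fin n → V) :
    inversionWeight w (swap a b) r = w (r a) (r b) := by
  rw [inversionWeight, prod_eq_single ⟨b, a⟩]
  · simp [hab.lt]
  · rintro ⟨u, v⟩ huv hne
    refine if_neg (swap_lt_swap_of_covBy hab (Perm.mem_finPairsLT.1 huv) ?_).not_gt
    rintro ⟨rfl, rfl⟩
    exact hne rfl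
  · exact fun h => (h (Perm.mem_finPairsLT.2 hab.lt)).elim

end InversionWeight

section WeightedPermMatrix

variable {R V : Type*} [CommRing R] [DecidableEq V] {n : ℕ}

def weightedPermMatrix (w : V → V → R) (σ : Perm (Fin n)) :
    Matrix (Fin n → V) (Fin n → V) R :=
  fun p r => if p = r ∘ σ then inversionWeight w σ r else 0

lemma weightedPermMatrix_one (w : V → V → R) : weightedPermMatrix w (1 : Perm (Fin n)) = 1 := by
  ext p r
  simp [weightedPermMatrix, Matrix.one_apply]

variable [Fintype V]

lemma weightedPermMatrix_mul {w : V → V → R} (hw : ∀ a b, w a b * w b a = 1)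
    (σ τ : Perm (Fin n)) :
    weightedPermMatrix w σ * weightedPermMatrix w τ = weightedPermMatrix w (τ * σ) := by
  ext p r
  simp only [weightedPermMatrix, Matrix.mul_apply, mul_ite, mul_zero, sum_ite_eq', mem_univ,
    if_true, ite_mul, zero_mul]
  rw [Perm.coe_mul, ← Function.comp_assoc, inversionWeight_mul hw]

def weightedPermRep {w : V → V → R} (hw : ∀ a b, w a b * w b a = 1) :
    (Perm (Fin n))ᵐᵒᵖ →* Matrix (Fin n → V) (Fin n → V) R where
  toFun σ := weightedPermMatrix w σ.unop
  map_one' := weightedPermMatrix_one w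
  map_mul' σ τ := (weightedPermMatrix_mul hw σ.unop τ.unop).symm

end WeightedPermMatrix

section

variable {R V : Type*} [CommRing R] [LinearOrder V]

lemma leg2_flip {N n : ℕ} (g : Fin N → Fin N → R) (a b : Fin n) :
    leg2 n (fun x y => if x.1 = y.2 ∧ x.2 = y.1 then g y.1 y.2 else 0) a b =
      fun p r => if p = r ∘ swap a b then g (r a) (r b) else 0 := by
  ext p r
  simp only [leg2, prod_boole, ite_zero_mul_ite_zero, mul_one, eq_comp_swap_iff]

def qWeight (q q' : R) (a b : V) : R :=
  if a = b then 1 else if a < b then q else q'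

lemma qWeight_mul_qWeight {q q' : R} (h : q * q' = 1) (a b : V) :
    qWeight q q' a b * qWeight q q' b a = 1 := by
  unfold qWeight
  rcases lt_trichotomy a b with hab | rfl | hab
  · simp [hab.ne, hab.ne', hab.not_gt, hab, h]
  · simp
  · simp [hab.ne, hab.ne', hab.not_gt, hab, h, mul_comm q']

lemma Ph_eq_flip (N : ℕ) (q q' : R) :
    Ph N q q' = fun x y => if x.1 = y.2 ∧ x.2 = y.1 then qWeight q q' y.1 y.2 else 0 := by
  ext ⟨x₁, x₂⟩ ⟨y₁, y₂⟩
  by_cases hxy : x₁ = y₂ ∧ x₂ = y₁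
  · obtain ⟨rfl, rfl⟩ := hxy
    simp [Ph, qWeight, @eq_comm _ x₁]
  · simp [Ph, hxy]

lemma weightedPermMatrix_qWeight_swap {N n : ℕ} (q q' : R) {a b : Fin n} (hab : a ⋖ b) :
    weightedPermMatrix (qWeight (V := Fin N) q q') (swap a b) = leg2 n (Ph N q q') a b := by
  rw [Ph_eq_flip, leg2_flip]
  ext p r
  simp [weightedPermMatrix, inversionWeight_swap _ hab]

end

lemma mclosure_swap_adjacent (n : ℕ) :
    Submonoid.closure {g : Perm (Fin n) |
      ∃ (i : ℕ) (h : i + 1 < n), g = swap ⟨i, Nat.lt_of_succ_lt h⟩ ⟨i + 1, h⟩} = ⊤ := by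
  cases n with
  | zero => exact eq_top_iff.2 fun g _ => Subsingleton.elim 1 g ▸ one_mem _
  | succ m =>
    refine top_unique (Perm.mclosure_swap_castSucc_succ m ▸ Submonoid.closure_mono ?_)
    rintro _ ⟨i, rfl⟩
    exact ⟨i, i.succ.isLt, rfl⟩

theorem Ph_symmetric_group_action_general (N n : ℕ)
    (A : Type*) [CommRing A] (q : Aˣ) :
    ∃! φ : Equiv.Perm (Fin n) →* (Matrix (Fin n → Fin N) (Fin n → Fin N) A)ˣ,
      ∀ (i : ℕ) (h : i + 1 < n),
        ((φ (Equiv.swap ⟨i, Nat.lt_of_succ_lt h⟩ ⟨i + 1, h⟩) : _ˣ) :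
            Matrix (Fin n → Fin N) (Fin n → Fin N) A) =
          leg2 n (Ph N ((q : A)) ((q⁻¹ : Aˣ) : A))
            ⟨i, Nat.lt_of_succ_lt h⟩ ⟨i + 1, h⟩ := by
  have hw : ∀ a b : Fin N, qWeight (q : A) ↑q⁻¹ a b * qWeight (q : A) ↑q⁻¹ b a = 1 :=
    qWeight_mul_qWeight q.mul_inv
  -- `weightedPermMatrix` lets `σ` act on index tuples on the right, hence the inversion.
  let φ : Perm (Fin n) →* (Matrix (Fin n → Fin N) (Fin n → Fin N) A)ˣ :=
    ((weightedPermRep hw).comp (MulEquiv.inv' _).toMonoidHom).toHomUnits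
  have hφ : ∀ (i : ℕ) (h : i + 1 < n),
      (φ (swap ⟨i, Nat.lt_of_succ_lt h⟩ ⟨i + 1, h⟩) : Matrix _ _ A) =
        leg2 n (Ph N (q : A) ↑q⁻¹) ⟨i, Nat.lt_of_succ_lt h⟩ ⟨i + 1, h⟩ := fun i h =>
    (congrArg (weightedPermMatrix _) (swap_inv _ _)).trans <|
      weightedPermMatrix_qWeight_swap _ _ (Fin.covBy_iff.2 (Order.covBy_add_one i))
  refine ⟨φ, hφ, fun ψ hψ => MonoidHom.eq_of_eqOn_denseM (mclosure_swap_adjacent n) ?_⟩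
  rintro _ ⟨i, h, rfl⟩
  exact Units.ext ((hψ i h).trans (hφ i h).symm)

/-- There is a unique group homomorphism `𝔖_n → (M_N(A)^{⊗n})ˣ` sending each
simple transposition `σ_i = (i, i+1)` to the copy `P^h_{i,i+1}` of the
`h`-permutation operator acting on tensor legs `i` and `i+1`. -/
theorem Ph_symmetric_group_action (N n : ℕ) (hN : 2 ≤ N)
    (A : Type*) [CommRing A] (q : Aˣ) :
    ∃! φ : Equiv.Perm (Fin n) →* (Matrix (Fin n → Fin N) (Fin n → Fin N) A)ˣ,
      ∀ (i : ℕ) (h : i + 1 < n),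
        ((φ (Equiv.swap ⟨i, Nat.lt_of_succ_lt h⟩ ⟨i + 1, h⟩) : _ˣ) :
            Matrix (Fin n → Fin N) (Fin n → Fin N) A) =
          leg2 n (Ph N ((q : A)) ((q⁻¹ : Aˣ) : A))
            ⟨i, Nat.lt_of_succ_lt h⟩ ⟨i + 1, h⟩ :=
  Ph_symmetric_group_action_general N n A q
end

section
/- Let N ≥ 2 and let f_q(x) ∈ ℂ(q)[[x]] be the unique power series with f_q(0) = 1 satisfying f_q(x q^{2N}) = f_q(x) · (1 − xq²)(1 − xq^{2N−2}) / ((1 − x)(1 − xq^{2N})) in ℂ(q)[[x]]. Write f_q(x) = 1 + Σ_{k≥1} f_{q,k} · x^k (1 − x)^{−k} with uniquely determined coefficients f_{q,k} ∈ ℂ(q). Then for every k ≥ 1 the rational function f_{q,k} · (q − 1)^{−k} is regular at q = 1, i.e. f_{q,k} lies in (q−1)^k · O, where O ⊂ ℂ(q) is the local ring of rational functions without pole at q = 1. -/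
/-!
Write `a n` for the coefficients of `f`, `Q = q ^ (2N)` and `E = (q² - 1)(q^(2N-2) - 1)`.
By Gregory–Newton, `c (k + 1)` is the `k`-th forward difference of `m ↦ a (m + 1)` at `0`, so it
suffices that `Δ^k a (m + 1)` vanishes to order `k + 1` at `q = 1` for every `m`.

Since `q² · q^(2N-2) = Q`, the functional equation reads
`(1 - Qx)(f(Qx) - f(x)) = E x f(x)/(1 - x)`, that is `M₀ a = E · (partial sums of a)` for the
operators `Mᵣ u m = (Q^(m+r+1) - 1) u (m+1) - Q (Q^m - 1) u m`. These satisfy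
`Mᵣ₊₁ (Δ u) = Δ (Mᵣ u) + (Q - 1)(1 - Q^r) Q · Q^m u (m+1)`, so `Mᵣ (Δ^r a)` is assembled from
`E` and the differences of lower order, and vanishes to order `r + 2` together with all its
differences. As `Q^n - 1` vanishes to order exactly one and the second coefficient of `Mᵣ`
vanishes at `m = 0`, an induction on `m` then gives the order `r + 1` of `Δ^r a (m + 1)`.
-/

open scoped Polynomial PowerSeries
open fwdDiff

/-- For `r = 0` and `u` the coefficients of `f`, `qDiffOp Q 0 u m` is the coefficient of
`x ^ (m + 1)` in `(1 - Q x) (f (Q x) - f x)`. -/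
def qDiffOp {R : Type*} [CommRing R] (Q : R) (r : ℕ) (u : ℕ → R) : ℕ → R :=
  fun m => (Q ^ (m + r + 1) - 1) * u (m + 1) - Q * (Q ^ m - 1) * u m

lemma qDiffOp_succ_fwdDiff {R : Type*} [CommRing R] (Q : R) (r : ℕ) (u : ℕ → R) :
    qDiffOp Q (r + 1) (Δ_[1] u) =
      Δ_[1] (qDiffOp Q r u) + ((Q - 1) * (1 - Q ^ r) * Q) • fun m => Q ^ m * u (m + 1) := by
  ext m
  simp only [qDiffOp, fwdDiff, Pi.add_apply, Pi.smul_apply, smul_eq_mul]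
  ring

lemma fwdDiff_iter_smul_const {R G : Type*} [Ring R] [AddCommGroup G] [Module R G]
    (f : ℕ → R) (g : G) (k : ℕ) :
    Δ_[1] ^[k] (fun m => f m • g) = fun m => Δ_[1] ^[k] f m • g := by
  induction k generalizing f with
  | zero => rfl
  | succ k ih => rw [Function.iterate_succ_apply, fwdDiff_smul_const]; exact ih (Δ_[1] f)

lemma fwdDiff_iter_sum_choose_mul_zero {R : Type*} [CommRing R] (b : ℕ → R) (k : ℕ) :
    Δ_[1] ^[k] (fun m => ∑ j ∈ Finset.range (m + 1), (m.choose j : R) * b j) 0 = b k := by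
  have hγ : Δ_[1] ^[k] (fun m => ∑ j ∈ Finset.range (m + 1), (m.choose j : R) * b j) 0 =
      Δ_[1] ^[k] (∑ j ∈ Finset.range (k + 1), fun m => (m.choose j : ℤ) • b j) 0 := by
    simp only [fwdDiff_iter_eq_sum_shift, zero_add, smul_eq_mul, mul_one, Finset.sum_apply]
    refine Finset.sum_congr rfl fun i hi => ?_
    congr 1
    simp only [zsmul_eq_mul, Int.cast_natCast]
    refine Finset.sum_subset (Finset.range_subset_range.mpr (by simp at hi; omega))
      fun j _ hj => ?_
    simp [Nat.choose_eq_zero_of_lt (by simpa using hj : i < j)]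
  rw [hγ, fwdDiff_iter_finsetSum, Finset.sum_apply]
  simp only [fwdDiff_iter_smul_const, fwdDiff_iter_choose_zero, ite_smul, one_smul, zero_smul]
  simp

namespace RatFunc

variable {F : Type*} [Field F]

/-- `(q - 1) ^ k · O`, where `O` is the local ring of `F[q]` at `q = 1`. -/
def vanishingAtOne (k : ℕ) : AddSubgroup (RatFunc F) where
  carrier := {r | ∃ a b : F[X], b.eval 1 ≠ 0 ∧
    r * algebraMap F[X] (RatFunc F) b = (X - 1) ^ k * algebraMap F[X] (RatFunc F) a}
  zero_mem' := ⟨0, 1, by simp, by simp⟩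
  add_mem' := by
    rintro r s ⟨a₁, b₁, hb₁, h₁⟩ ⟨a₂, b₂, hb₂, h₂⟩
    refine ⟨a₁ * b₂ + a₂ * b₁, b₁ * b₂, by simp [hb₁, hb₂], ?_⟩
    simp only [map_mul, map_add]
    linear_combination
      algebraMap F[X] (RatFunc F) b₂ * h₁ + algebraMap F[X] (RatFunc F) b₁ * h₂
  neg_mem' := by
    rintro r ⟨a, b, hb, h⟩
    exact ⟨-a, b, hb, by simp only [map_neg]; linear_combination -h⟩

lemma mul_mem_vanishingAtOne {j k : ℕ} {r s : RatFunc F} (hr : r ∈ vanishingAtOne j)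
    (hs : s ∈ vanishingAtOne k) : r * s ∈ vanishingAtOne (j + k) := by
  obtain ⟨a₁, b₁, hb₁, h₁⟩ := hr
  obtain ⟨a₂, b₂, hb₂, h₂⟩ := hs
  refine ⟨a₁ * a₂, b₁ * b₂, by simp [hb₁, hb₂], ?_⟩
  simp only [map_mul, pow_add]
  linear_combination (s * algebraMap F[X] (RatFunc F) b₂) * h₁ +
    ((X - 1) ^ j * algebraMap F[X] (RatFunc F) a₁) * h₂

lemma pow_mem_vanishingAtOne_zero {r : RatFunc F} (hr : r ∈ vanishingAtOne 0) (m : ℕ) :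
    r ^ m ∈ vanishingAtOne 0 := by
  induction m with
  | zero => exact ⟨1, 1, by simp, by simp⟩
  | succ m ih => simpa [pow_succ] using mul_mem_vanishingAtOne ih hr

lemma X_sub_one_eq_algebraMap : (X - 1 : RatFunc F) = algebraMap F[X] (RatFunc F) (.X - 1) := by
  simp [algebraMap_X]

lemma X_sub_one_ne_zero : (X - 1 : RatFunc F) ≠ 0 := by
  rw [X_sub_one_eq_algebraMap]
  exact algebraMap_ne_zero (Polynomial.X_sub_C_ne_zero 1)

lemma vanishingAtOne_antitone {j k : ℕ} (hjk : j ≤ k) :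
    vanishingAtOne (F := F) k ≤ vanishingAtOne j := by
  rintro r ⟨a, b, hb, h⟩
  refine ⟨(.X - 1) ^ (k - j) * a, b, hb, ?_⟩
  rw [h, map_mul, map_pow, ← X_sub_one_eq_algebraMap, ← mul_assoc, ← pow_add,
    Nat.add_sub_cancel' hjk]

lemma X_pow_sub_one_eq (n : ℕ) :
    (X ^ n - 1 : RatFunc F) =
      (X - 1) * algebraMap F[X] (RatFunc F) (∑ i ∈ Finset.range n, .X ^ i) := by
  simp [mul_geom_sum, algebraMap_X]

lemma X_pow_mem_vanishingAtOne_zero (n : ℕ) : (X ^ n : RatFunc F) ∈ vanishingAtOne 0 :=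
  ⟨.X ^ n, 1, by simp, by simp [algebraMap_X]⟩

lemma X_pow_sub_one_mem_vanishingAtOne_one (n : ℕ) :
    (X ^ n - 1 : RatFunc F) ∈ vanishingAtOne 1 :=
  ⟨∑ i ∈ Finset.range n, .X ^ i, 1, by simp,
    by rw [map_one, mul_one, pow_one, X_pow_sub_one_eq]⟩

/-- Dividing by `q ^ n - 1` costs exactly one order, as `(q ^ n - 1) / (q - 1)` takes the value
`n` at `q = 1`. -/
lemma mem_vanishingAtOne_of_mul_X_pow_sub_one [CharZero F] {k n : ℕ} (hn : n ≠ 0)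
    {r : RatFunc F} (h : r * (X ^ n - 1) ∈ vanishingAtOne (k + 1)) : r ∈ vanishingAtOne k := by
  obtain ⟨a, b, hb, h⟩ := h
  refine ⟨a, (∑ i ∈ Finset.range n, .X ^ i) * b, ?_, ?_⟩
  · simp [Polynomial.eval_finsetSum, hn, hb]
  · apply mul_left_cancel₀ (X_sub_one_ne_zero (F := F))
    rw [X_pow_sub_one_eq, pow_succ] at h
    rw [map_mul]
    linear_combination h

abbrev FwdDiffsVanish (n k : ℕ) (φ : ℕ → RatFunc F) : Prop :=
  ∀ j ≤ n, ∀ m, Δ_[1] ^[j] φ m ∈ vanishingAtOne (k + j)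

namespace FwdDiffsVanish

variable {n k : ℕ} {φ ψ : ℕ → RatFunc F}

lemma add (hφ : FwdDiffsVanish n k φ) (hψ : FwdDiffsVanish n k ψ) :
    FwdDiffsVanish n k (φ + ψ) := fun j hj m => by
  rw [fwdDiff_iter_add, Pi.add_apply]
  exact add_mem (hφ j hj m) (hψ j hj m)

lemma const_smul {c : RatFunc F} {l : ℕ} (hc : c ∈ vanishingAtOne l)
    (hφ : FwdDiffsVanish n k φ) : FwdDiffsVanish n (k + l) (c • φ) := fun j hj m => by
  rw [fwdDiff_iter_const_smul, Pi.smul_apply, smul_eq_mul, add_right_comm, add_comm]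
  exact mul_mem_vanishingAtOne hc (hφ j hj m)

lemma mono (hφ : FwdDiffsVanish n k φ) {n' : ℕ} (h : n' ≤ n) : FwdDiffsVanish n' k φ :=
  fun j hj => hφ j (hj.trans h)

lemma fwdDiff_iter (hφ : FwdDiffsVanish n k φ) {i : ℕ} (hi : i ≤ n) :
    FwdDiffsVanish (n - i) (k + i) (Δ_[1] ^[i] φ) := fun j hj m => by
  rw [← Function.iterate_add_apply, add_assoc, add_comm i j]
  exact hφ (j + i) (by omega) m

lemma of_fwdDiff (h₀ : ∀ m, φ m ∈ vanishingAtOne k)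
    (h : FwdDiffsVanish n (k + 1) (Δ_[1] φ)) : FwdDiffsVanish (n + 1) k φ
  | 0, _ => h₀
  | j + 1, hj => fun m => by
    rw [Function.iterate_succ_apply, ← add_assoc, add_right_comm]
    exact h j (by omega) m

lemma fwdDiff_geom_mul (Q : RatFunc F) (ψ : ℕ → RatFunc F) :
    Δ_[1] (fun m => Q ^ m * ψ m) = fun m => Q ^ m * (Q • Δ_[1] ψ + (Q - 1) • ψ) m := by
  ext m
  simp only [fwdDiff, Pi.add_apply, Pi.smul_apply, smul_eq_mul, pow_succ]
  ring

lemma geom_mul {Q : RatFunc F} (hQ : Q ∈ vanishingAtOne 0) (hQ₁ : Q - 1 ∈ vanishingAtOne 1)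
    (hψ : FwdDiffsVanish n k ψ) : FwdDiffsVanish n k (fun m => Q ^ m * ψ m) := by
  intro j
  induction j generalizing n k ψ with
  | zero =>
    intro _ m
    simpa using mul_mem_vanishingAtOne (pow_mem_vanishingAtOne_zero hQ m) (hψ 0 (Nat.zero_le _) m)
  | succ j ih =>
    intro hj m
    obtain ⟨n, rfl⟩ : ∃ n', n = n' + 1 := ⟨n - 1, by omega⟩
    rw [Function.iterate_succ_apply, fwdDiff_geom_mul, ← add_assoc, add_right_comm]
    refine ih (.add ?_ ((hψ.mono n.le_succ).const_smul hQ₁)) (by omega) m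
    simpa using (hψ.fwdDiff_iter (i := 1) (by omega)).const_smul hQ

end FwdDiffsVanish

section QDiffOp

variable {d : ℕ}

lemma mul_X_pow_sub_one_eq_qDiffOp (u : ℕ → RatFunc F) (r m : ℕ) :
    u (m + 1) * (X ^ (d * (m + r + 1)) - 1) =
      qDiffOp (X ^ d) r u m + X ^ d * (X ^ (d * m) - 1) * u m := by
  simp only [qDiffOp, pow_mul]
  ring

lemma mem_vanishingAtOne_of_qDiffOp [CharZero F] (hd : d ≠ 0) {u : ℕ → RatFunc F} {k r : ℕ}
    (h : ∀ m, qDiffOp (X ^ d) r u m ∈ vanishingAtOne (k + 1)) (m : ℕ) :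
    u (m + 1) ∈ vanishingAtOne k := by
  induction m with
  | zero =>
    refine mem_vanishingAtOne_of_mul_X_pow_sub_one (n := d * (0 + r + 1)) (by positivity) ?_
    rw [mul_X_pow_sub_one_eq_qDiffOp u r 0]
    simpa using h 0
  | succ m ih =>
    refine mem_vanishingAtOne_of_mul_X_pow_sub_one (n := d * (m + 1 + r + 1)) (by positivity) ?_
    rw [mul_X_pow_sub_one_eq_qDiffOp u r (m + 1)]
    refine add_mem (h _) ?_
    simpa only [add_comm] using mul_mem_vanishingAtOne (mul_mem_vanishingAtOne
      (X_pow_mem_vanishingAtOne_zero d) (X_pow_sub_one_mem_vanishingAtOne_one _)) ih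

variable {E : RatFunc F} {a : ℕ → RatFunc F}

lemma mem_vanishingAtOne_one_of_qDiffOp_zero [CharZero F] (hd : d ≠ 0)
    (hE : E ∈ vanishingAtOne 2) (ha₀ : a 0 ∈ vanishingAtOne 0)
    (hrec : ∀ m, qDiffOp (X ^ d) 0 a m = E * ∑ i ∈ Finset.range (m + 1), a i) (m : ℕ) :
    a (m + 1) ∈ vanishingAtOne 1 := by
  induction m using Nat.strong_induction_on with
  | _ m ih =>
    refine mem_vanishingAtOne_of_mul_X_pow_sub_one (n := d * (m + 0 + 1)) (by positivity) ?_
    rw [mul_X_pow_sub_one_eq_qDiffOp a 0 m, hrec]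
    refine add_mem (s := vanishingAtOne (2 + 0)) ?_ ?_
    · refine mul_mem_vanishingAtOne hE (sum_mem fun i hi => ?_)
      rcases i with _ | i
      · exact ha₀
      · exact vanishingAtOne_antitone (Nat.zero_le 1) (ih i (by simp at hi; omega))
    · rcases m with _ | m
      · simp
      · simpa using mul_mem_vanishingAtOne (mul_mem_vanishingAtOne
          (X_pow_mem_vanishingAtOne_zero d) (X_pow_sub_one_mem_vanishingAtOne_one _))
          (ih m (by omega))

lemma fwdDiffsVanish_qDiffOp (hE : E ∈ vanishingAtOne 2) (ha₀ : a 0 ∈ vanishingAtOne 0)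
    (hrec : ∀ m, qDiffOp (X ^ d) 0 a m = E * ∑ i ∈ Finset.range (m + 1), a i) {n : ℕ}
    (ha : FwdDiffsVanish n 1 (fun m => a (m + 1))) :
    ∀ r ≤ n + 1, FwdDiffsVanish (n + 1 - r) (r + 2) (qDiffOp (X ^ d) r (Δ_[1] ^[r] a)) := by
  intro r hr
  induction r with
  | zero =>
    have hS : FwdDiffsVanish (n + 1) 0 (fun m => ∑ i ∈ Finset.range (m + 1), a i) := by
      refine .of_fwdDiff (fun m => sum_mem fun i _ => ?_) ?_
      · rcases i with _ | i
        · exact ha₀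
        · exact vanishingAtOne_antitone (Nat.zero_le 1) (ha 0 (Nat.zero_le n) i)
      · convert ha using 1
        ext m
        simp [fwdDiff, Finset.sum_range_succ _ (m + 1)]
    rw [show qDiffOp (X ^ d) 0 (Δ_[1] ^[0] a) = E • _ from funext hrec]
    simpa using hS.const_smul hE
  | succ r ih =>
    have hC : (X ^ d - 1) * (1 - (X ^ d) ^ r) * X ^ d ∈
        vanishingAtOne (F := F) (1 + 1 + 0) := by
      refine mul_mem_vanishingAtOne (mul_mem_vanishingAtOne
        (X_pow_sub_one_mem_vanishingAtOne_one d) ?_) (X_pow_mem_vanishingAtOne_zero d)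
      rw [← pow_mul, ← neg_sub]
      exact neg_mem (X_pow_sub_one_mem_vanishingAtOne_one _)
    have h₁ := (ih (by omega)).fwdDiff_iter (i := 1) (by omega)
    have h₂ := ((ha.fwdDiff_iter (i := r) (by omega)).geom_mul (X_pow_mem_vanishingAtOne_zero d)
      (X_pow_sub_one_mem_vanishingAtOne_one d)).const_smul hC
    rw [Function.iterate_one, show n + 1 - r - 1 = n - r by omega,
      show r + 2 + 1 = r + 1 + 2 by omega] at h₁
    rw [show 1 + r + (1 + 1 + 0) = r + 1 + 2 by omega] at h₂
    simp only [fwdDiff_iter_comp_add] at h₂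
    rw [Function.iterate_succ_apply', qDiffOp_succ_fwdDiff, show n + 1 - (r + 1) = n - r by omega]
    exact h₁.add h₂

theorem fwdDiffsVanish_of_qDiffOp_zero [CharZero F] (hd : d ≠ 0) (hE : E ∈ vanishingAtOne 2)
    (ha₀ : a 0 ∈ vanishingAtOne 0)
    (hrec : ∀ m, qDiffOp (X ^ d) 0 a m = E * ∑ i ∈ Finset.range (m + 1), a i) (n : ℕ) :
    FwdDiffsVanish n 1 (fun m => a (m + 1)) := by
  induction n with
  | zero =>
    intro j hj m
    obtain rfl : j = 0 := by omega
    exact mem_vanishingAtOne_one_of_qDiffOp_zero hd hE ha₀ hrec m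
  | succ n ih =>
    have hrel := fwdDiffsVanish_qDiffOp hE ha₀ hrec ih (n + 1) le_rfl
    intro j hj m
    rcases Nat.lt_or_eq_of_le hj with hj | rfl
    · exact ih j (by omega) m
    · rw [fwdDiff_iter_comp_add, show 1 + (n + 1) = n + 2 by omega]
      exact mem_vanishingAtOne_of_qDiffOp hd (fun m => by simpa using hrel 0 (Nat.zero_le _) m) m

end QDiffOp

end RatFunc

namespace PowerSeries

variable {K : Type*} [Field K]

lemma inv_one_sub_X_eq_mk_one : (1 - X : K⟦X⟧)⁻¹ = mk 1 :=
  (PowerSeries.inv_eq_iff_mul_eq_one (by simp)).mpr (mk_one_mul_one_sub_eq_one K)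

lemma coeff_succ_X_mul_inv_one_sub_X_pow_succ (m k : ℕ) :
    coeff (m + 1) ((X * (1 - X : K⟦X⟧)⁻¹) ^ (k + 1)) = (m.choose k : K) := by
  rw [inv_one_sub_X_eq_mk_one, mul_pow, mk_one_pow_eq_mk_choose_add, coeff_X_pow_mul', coeff_mk]
  split_ifs with h
  · rw [show m + 1 - (k + 1) = m - k by omega, Nat.add_sub_cancel' (by omega)]
  · rw [Nat.choose_eq_zero_of_lt (by omega), Nat.cast_zero]

lemma eq_fwdDiff_iter_of_coeff_eq_sum {f : K⟦X⟧} {c : ℕ → K}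
    (hrep : ∀ n, coeff n f =
      ∑ k ∈ Finset.range (n + 1), c k * coeff n ((X * (1 - X)⁻¹) ^ k)) (k : ℕ) :
    c (k + 1) = Δ_[1] ^[k] (fun m => coeff (m + 1) f) 0 := by
  have hα : (fun m => coeff (m + 1) f) =
      fun m => ∑ j ∈ Finset.range (m + 1), (m.choose j : K) * c (j + 1) := by
    ext m
    rw [hrep, Finset.sum_range_succ']
    simp [coeff_succ_X_mul_inv_one_sub_X_pow_succ, mul_comm]
  rw [hα, fwdDiff_iter_sum_choose_mul_zero]

lemma qDiffOp_coeff_of_rescale_eq {f : K⟦X⟧} {Q a b : K} (hab : a * b = Q)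
    (hf : rescale Q f = f * ((1 - C a * X) * (1 - C b * X) * (1 - X)⁻¹ * (1 - C Q * X)⁻¹))
    (m : ℕ) : qDiffOp Q 0 (fun n => coeff n f) m =
      (a - 1) * (b - 1) * ∑ i ∈ Finset.range (m + 1), coeff i f := by
  have hu : (1 - X : K⟦X⟧)⁻¹ * (1 - X) = 1 := PowerSeries.inv_mul_cancel _ (by simp)
  have hv : (1 - C Q * X : K⟦X⟧)⁻¹ * (1 - C Q * X) = 1 :=
    PowerSeries.inv_mul_cancel _ (by simp)
  have hC : C a * C b = C Q := by rw [← map_mul, hab]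
  have key : (rescale Q f - f) * (1 - C Q * X) =
      C ((a - 1) * (b - 1)) * (f * (1 - X)⁻¹ * X) := by
    rw [hf]
    simp only [map_mul, map_sub, map_one]
    linear_combination (f * (1 - C a * X) * (1 - C b * X) * (1 - X)⁻¹) * hv
      + f * (1 - C Q * X) * hu + f * (1 - X)⁻¹ * (X ^ 2 - X) * hC
  have hcoeff := congrArg (coeff (m + 1)) key
  rw [mul_sub, mul_one, ← mul_assoc, mul_comm _ (C Q), mul_assoc, map_sub, coeff_C_mul,
    coeff_C_mul, coeff_succ_mul_X, coeff_succ_mul_X, map_sub, map_sub, coeff_rescale,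
    coeff_rescale, inv_one_sub_X_eq_mk_one, coeff_mul,
    Finset.Nat.sum_antidiagonal_eq_sum_range_succ_mk] at hcoeff
  simp only [coeff_mk, Pi.one_apply, mul_one] at hcoeff
  simp only [qDiffOp]
  linear_combination hcoeff

end PowerSeries

theorem fq_coefficients_regular_at_one_general (N : ℕ) (hN : 2 ≤ N)
    (f : PowerSeries (RatFunc ℂ)) (c : ℕ → RatFunc ℂ)
    (hf0 : PowerSeries.constantCoeff f = 1)
    (hfun : PowerSeries.rescale ((RatFunc.X : RatFunc ℂ) ^ (2 * N)) f =
      f * ((1 - PowerSeries.C ((RatFunc.X : RatFunc ℂ) ^ 2) *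
              PowerSeries.X) *
           (1 - PowerSeries.C ((RatFunc.X : RatFunc ℂ) ^ (2 * N - 2)) *
              PowerSeries.X) *
           (1 - PowerSeries.X)⁻¹ *
           (1 - PowerSeries.C ((RatFunc.X : RatFunc ℂ) ^ (2 * N)) *
              PowerSeries.X)⁻¹))
    (hrep : ∀ n : ℕ, PowerSeries.coeff n f =
      ∑ k ∈ Finset.range (n + 1), c k *
        PowerSeries.coeff n
          ((PowerSeries.X * (1 - PowerSeries.X)⁻¹) ^ k)) :
    ∀ k : ℕ, 1 ≤ k → ∃ a b : Polynomial ℂ,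
      Polynomial.eval 1 b ≠ 0 ∧
      c k * algebraMap (Polynomial ℂ) (RatFunc ℂ) b =
        ((RatFunc.X : RatFunc ℂ) - 1) ^ k * algebraMap (Polynomial ℂ) (RatFunc ℂ) a := by
  intro k hk
  obtain ⟨k, rfl⟩ : ∃ j, k = j + 1 := ⟨k - 1, by omega⟩
  have hrec := PowerSeries.qDiffOp_coeff_of_rescale_eq
    (by rw [← pow_add]; congr 1; omega) hfun
  have hE : ((RatFunc.X : RatFunc ℂ) ^ 2 - 1) * (RatFunc.X ^ (2 * N - 2) - 1) ∈
      RatFunc.vanishingAtOne 2 :=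
    RatFunc.mul_mem_vanishingAtOne (RatFunc.X_pow_sub_one_mem_vanishingAtOne_one _)
      (RatFunc.X_pow_sub_one_mem_vanishingAtOne_one _)
  have ha₀ : PowerSeries.coeff 0 f ∈ RatFunc.vanishingAtOne 0 := by
    simpa [hf0] using RatFunc.X_pow_mem_vanishingAtOne_zero (F := ℂ) 0
  have h := RatFunc.fwdDiffsVanish_of_qDiffOp_zero (by omega) hE ha₀ hrec k k le_rfl 0
  rw [← PowerSeries.eq_fwdDiff_iter_of_coeff_eq_sum hrep, add_comm] at h
  exact h

/-- Let `f_q ∈ ℂ(q)[[x]]` be the unique power series with constant term `1`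
satisfying `f_q(x q^{2N}) = f_q(x) · (1 − xq²)(1 − xq^{2N−2})/((1 − x)(1 − xq^{2N}))`,
and write `f_q(x) = 1 + Σ_{k≥1} c_k (x/(1−x))^k` (the representation being
encoded coefficientwise: the `n`-th coefficient of `f` is the finite sum
`Σ_{k=0}^{n} c_k · coeff_n ((x(1−x)⁻¹)^k)`, with `c 0 = 1`).  Then for every
`k ≥ 1` the coefficient `c_k` lies in `(q−1)^k · O`, where `O ⊂ ℂ(q)` is the
local ring of rational functions with no pole at `q = 1`; that is, there are
polynomials `a, b` with `b(1) ≠ 0` and `c_k · b = (q−1)^k · a` in `ℂ(q)`. -/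
theorem fq_coefficients_regular_at_one (N : ℕ) (hN : 2 ≤ N)
    (f : PowerSeries (RatFunc ℂ)) (c : ℕ → RatFunc ℂ)
    (hf0 : PowerSeries.constantCoeff f = 1)
    (hfun : PowerSeries.rescale ((RatFunc.X : RatFunc ℂ) ^ (2 * N)) f =
      f * ((1 - PowerSeries.C ((RatFunc.X : RatFunc ℂ) ^ 2) *
              PowerSeries.X) *
           (1 - PowerSeries.C ((RatFunc.X : RatFunc ℂ) ^ (2 * N - 2)) *
              PowerSeries.X) *
           (1 - PowerSeries.X)⁻¹ *
           (1 - PowerSeries.C ((RatFunc.X : RatFunc ℂ) ^ (2 * N)) *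
              PowerSeries.X)⁻¹))
    (hc0 : c 0 = 1)
    (hrep : ∀ n : ℕ, PowerSeries.coeff n f =
      ∑ k ∈ Finset.range (n + 1), c k *
        PowerSeries.coeff n
          ((PowerSeries.X * (1 - PowerSeries.X)⁻¹) ^ k)) :
    ∀ k : ℕ, 1 ≤ k → ∃ a b : Polynomial ℂ,
      Polynomial.eval 1 b ≠ 0 ∧
      c k * algebraMap (Polynomial ℂ) (RatFunc ℂ) b =
        ((RatFunc.X : RatFunc ℂ) - 1) ^ k * algebraMap (Polynomial ℂ) (RatFunc ℂ) a :=
  fq_coefficients_regular_at_one_general N hN f c hf0 hfun hrep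
end

section
/- Let f_k ∈ h^k ℂ[[h]] for k ≥ 1 be given, and set f(x) = 1 + Σ_{k≥1} f_k x^k (1 − x)^{−k} ∈ ℂ[[x, h]]. Then there exist unique elements g_k ∈ ℂ[[h]], k ≥ 0, such that f(x) / (1 − e^{−h}x) = Σ_{k≥0} g_k x^k (1 − x)^{−(k+1)} in ℂ[[x, h]]; moreover g_0 = 1 and g_k ∈ h^k ℂ[[h]] for all k ≥ 1. -/
/-! Substitute `Y = x (1 - x)⁻¹`, which has zero constant term. Then `f = φ(Y)` with
`φ(t) = 1 + Σ f_k t^k`, `x^k (1 - x)^{-(k+1)} = (1 - x)⁻¹ Y^k`, and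
`1 - e^{-h} x = (1 - x)(1 - u Y)` with `u = e^{-h} - 1`. Hence
`f / (1 - e^{-h} x) = (1 - x)⁻¹ ψ(Y)` with `ψ(t) = φ(t) / (1 - u t)`, so `g_k` is the `k`-th
coefficient of `ψ`, namely `Σ_{j ≤ k} f_j u^{k-j}`; as `h ∣ u` and `h^j ∣ f_j`, `h^k ∣ g_k`.
Uniqueness holds because the coefficient of `x^n` in `x^k (1 - x)^{-(k+1)}` is `0` for `k > n`
and `1` for `k = n`, so the system for the `g_k` is unitriangular. -/

open PowerSeries Finset

theorem eq_of_forall_sum_range_succ_mul_eq {R : Type*} [CommRing R] {a : ℕ → ℕ → R}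
    (ha : ∀ n, IsUnit (a n n)) {g₁ g₂ : ℕ → R}
    (h : ∀ n, ∑ k ∈ range (n + 1), g₁ k * a n k = ∑ k ∈ range (n + 1), g₂ k * a n k) :
    g₁ = g₂ := by
  funext n
  induction n using Nat.strong_induction_on with
  | _ n ih =>
    have hn := h n
    rw [sum_range_succ, sum_range_succ,
      sum_congr rfl fun k hk ↦ by rw [ih k (mem_range.mp hk)]] at hn
    exact (ha n).mul_left_inj.mp (add_left_cancel hn)

namespace PowerSeries

variable {R : Type*} [CommRing R]

theorem pow_dvd_coeff_mul {t : R} {p q : R⟦X⟧} (hp : ∀ j, t ^ j ∣ coeff j p)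
    (hq : ∀ j, t ^ j ∣ coeff j q) (n : ℕ) : t ^ n ∣ coeff n (p * q) := by
  rw [coeff_mul]
  refine dvd_sum fun ij hij ↦ ?_
  rw [← mem_antidiagonal.mp hij, pow_add]
  exact mul_dvd_mul (hp ij.1) (hq ij.2)

theorem coeff_X_pow_mul_pow_succ {v : R⟦X⟧} (hv : constantCoeff v = 1) (n : ℕ) :
    coeff n (X ^ n * v ^ (n + 1)) = 1 := by
  simp [coeff_X_pow_mul', hv]

theorem one_sub_C_mul_X_mul_mk_pow (u : R) : (1 - C u * X) * mk (fun n ↦ u ^ n) = 1 := by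
  simpa [rescale_mk, rescale_X, mul_comm] using congrArg (rescale u) (mk_one_mul_one_sub_eq_one R)

theorem coeff_mul_subst_eq_sum {a : R⟦X⟧} (ha : constantCoeff a = 0) (b f : R⟦X⟧) (n : ℕ) :
    coeff n (b * f.subst a) = ∑ k ∈ range (n + 1), coeff k f * coeff n (b * a ^ k) := by
  have hsubst : HasSubst a := .of_constantCoeff_zero' ha
  have htail : coeff n (b * (a ^ (n + 1) * (mk fun i ↦ coeff (i + (n + 1)) f).subst a)) = 0 := by
    refine X_pow_dvd_iff.mp ?_ n n.lt_succ_self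
    exact (pow_dvd_pow_of_dvd (X_dvd_iff.mpr ha) _).mul_right _ |>.mul_left b
  conv_lhs => rw [eq_X_pow_mul_shift_add_trunc (n + 1) f]
  rw [subst_add hsubst, subst_mul hsubst, subst_pow hsubst, subst_X hsubst, subst_coe hsubst,
    Polynomial.aeval_eq_sum_range' (natDegree_trunc_lt f n), mul_add, map_add, htail, zero_add,
    mul_sum, map_sum]
  refine sum_congr rfl fun k hk ↦ ?_
  rw [coeff_trunc, if_pos (mem_range.mp hk), mul_smul_comm, LinearMap.map_smul, smul_eq_mul]

theorem mk_eq_subst_update {a : R⟦X⟧} (ha : constantCoeff a = 0) (φ : ℕ → R) :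
    (mk fun n ↦ (if n = 0 then 1 else 0) + ∑ k ∈ Icc 1 n, φ k * coeff n (a ^ k)) =
      (mk (Function.update φ 0 1)).subst a := by
  ext n
  rw [coeff_mk, ← one_mul (subst a _), coeff_mul_subst_eq_sum ha, Nat.range_succ_eq_Icc_zero,
    ← insert_Icc_add_one_left_eq_Icc n.zero_le, sum_insert (by simp)]
  refine congrArg₂ (· + ·) (by simp [coeff_one]) (sum_congr rfl fun k hk ↦ ?_)
  rw [coeff_mk, Function.update_of_ne (by grind), one_mul]

theorem hasSubst_X_mul (v : R⟦X⟧) : HasSubst (X * v) := .of_constantCoeff_zero' (by simp)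

variable {v : R⟦X⟧}

theorem one_sub_C_mul_X_eq_mul_subst (hv : (1 - X) * v = 1) (c : R) :
    1 - C c * X = (1 - X) * (1 - C (c - 1) * X).subst (X * v) := by
  have hsubst := hasSubst_X_mul v
  rw [← coe_substAlgHom hsubst, map_sub, map_one, map_mul, coe_substAlgHom, subst_X hsubst,
    subst_C]
  -- `subst_C` produces an `MvPowerSeries.C`
  change _ = (1 - X) * (1 - C (c - 1) * (X * v))
  rw [map_sub, map_one]
  linear_combination (C c - 1) * X * hv

theorem eq_mul_subst_of_mul_eq_one (hv : (1 - X) * v = 1) {c : R} {w : R⟦X⟧}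
    (hw : (1 - C c * X) * w = 1) :
    w = v * (mk fun n ↦ (c - 1) ^ n).subst (X * v) := by
  have hsubst := hasSubst_X_mul v
  refine (left_inv_eq_right_inv ?_ hw).symm
  rw [mul_comm, one_sub_C_mul_X_eq_mul_subst hv, mul_mul_mul_comm, hv, ← subst_mul hsubst,
    one_sub_C_mul_X_mul_mk_pow, one_mul, ← coe_substAlgHom hsubst, map_one]

theorem coeff_subst_mul_eq_sum_of_mul_eq_one (hv : (1 - X) * v = 1) {c : R} {w : R⟦X⟧}
    (hw : (1 - C c * X) * w = 1) (f : R⟦X⟧) (n : ℕ) :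
    coeff n (f.subst (X * v) * w) = ∑ k ∈ range (n + 1),
      coeff k (f * mk fun j ↦ (c - 1) ^ j) * coeff n (X ^ k * v ^ (k + 1)) := by
  have hsubst := hasSubst_X_mul v
  rw [eq_mul_subst_of_mul_eq_one hv hw, mul_left_comm, ← subst_mul hsubst,
    coeff_mul_subst_eq_sum (by simp)]
  refine sum_congr rfl fun k _ ↦ by congr 2; ring

end PowerSeries

/-- Work in `ℂ[[x,h]] = (ℂ[[h]])[[x]]`, with `x` the outer variable and `h` the
inner one.  Given `f_k ∈ h^k ℂ[[h]]` for `k ≥ 1`, let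
`f(x) = 1 + Σ_{k≥1} f_k x^k (1−x)^{−k}` (defined coefficientwise in `x`, each
coefficient being a finite sum).  Then there exist unique `g_k ∈ ℂ[[h]]` with
`f(x)/(1 − e^{−h}x) = Σ_{k≥0} g_k x^k (1−x)^{−(k+1)}` (again encoded
coefficientwise in `x`); moreover `g_0 = 1` and `g_k ∈ h^k ℂ[[h]]` for `k ≥ 1`. -/
theorem normalization_series_expansion
    (fk : ℕ → PowerSeries ℂ)
    (hfk : ∀ k : ℕ, 1 ≤ k → ∃ a : PowerSeries ℂ,
      fk k = (PowerSeries.X : PowerSeries ℂ) ^ k * a) :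
    let A := PowerSeries ℂ
    let invX : PowerSeries A := PowerSeries.invOfUnit (1 - PowerSeries.X) 1
    let eNegH : A := PowerSeries.rescale (-1) (PowerSeries.exp ℂ)
    let invE : PowerSeries A :=
      PowerSeries.invOfUnit (1 - PowerSeries.C (R := A) eNegH * PowerSeries.X) 1
    let F : PowerSeries A := PowerSeries.mk fun n =>
      (if n = 0 then (1 : A) else 0) +
        ∑ k ∈ Finset.Icc 1 n, fk k *
          PowerSeries.coeff (R := A) n ((PowerSeries.X * invX) ^ k)
    (∃! g : ℕ → A,
        ∀ n : ℕ, PowerSeries.coeff (R := A) n (F * invE) =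
          ∑ k ∈ Finset.range (n + 1), g k *
            PowerSeries.coeff (R := A) n (PowerSeries.X ^ k * invX ^ (k + 1)))
    ∧ ∀ g : ℕ → A,
        (∀ n : ℕ, PowerSeries.coeff (R := A) n (F * invE) =
          ∑ k ∈ Finset.range (n + 1), g k *
            PowerSeries.coeff (R := A) n (PowerSeries.X ^ k * invX ^ (k + 1))) →
        g 0 = 1 ∧ ∀ k : ℕ, 1 ≤ k → ∃ a : A,
          g k = (PowerSeries.X : PowerSeries ℂ) ^ k * a := by
  intro A invX eNegH invE F
  have hinvX : (1 - X) * invX = 1 := mul_invOfUnit _ _ (by simp)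
  have hinvE : (1 - C eNegH * X) * invE = 1 := mul_invOfUnit _ _ (by simp)
  set g : ℕ → A := fun k ↦ coeff k (mk (Function.update fk 0 1) * mk fun j ↦ (eNegH - 1) ^ j)
  have hexpand : ∀ n, coeff n (F * invE) =
      ∑ k ∈ range (n + 1), g k * coeff n (X ^ k * invX ^ (k + 1)) := by
    have hF : F = (mk (Function.update fk 0 1)).subst (X * invX) :=
      mk_eq_subst_update (by simp) fk
    rw [hF]
    exact coeff_subst_mul_eq_sum_of_mul_eq_one hinvX hinvE _
  have hdiag : ∀ n, IsUnit (coeff n (X ^ n * invX ^ (n + 1))) := fun n ↦ by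
    rw [coeff_X_pow_mul_pow_succ (by simpa using congrArg constantCoeff hinvX)]
    exact isUnit_one
  have hunique : ∀ g' : ℕ → A, (∀ n, coeff n (F * invE) =
      ∑ k ∈ range (n + 1), g' k * coeff n (X ^ k * invX ^ (k + 1))) → g' = g := fun g' hg' ↦
    eq_of_forall_sum_range_succ_mul_eq hdiag fun n ↦ (hg' n).symm.trans (hexpand n)
  refine ⟨⟨g, hexpand, hunique⟩, fun g' hg' ↦ ?_⟩
  obtain rfl := hunique g' hg'
  have hXu : (X : A) ∣ eNegH - 1 := by
    rw [X_dvd_iff, map_sub, ← coeff_zero_eq_constantCoeff_apply, coeff_rescale]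
    simp
  refine ⟨by simp [g], fun k _ ↦ pow_dvd_coeff_mul (fun j ↦ ?_) (fun j ↦ ?_) k⟩
  · rcases Nat.eq_zero_or_pos j with rfl | hj
    · simp
    · rw [coeff_mk, Function.update_of_ne hj.ne']
      exact hfk j hj
  · rw [coeff_mk]
    exact pow_dvd_pow_of_dvd hXu j
end

section
/- Let N ≥ 2 and n, m ≥ 1 be integers, K a field, q ∈ K nonzero, F = K(x₁,…,x_n, y₁,…,y_m), and B a unital associative F-algebra. For any matrices S₁,…,S_{n+m} ∈ M_N(B) (no relations assumed), the ordered product S_{[n+m]}(x,y) = →∏_{i=1..n+m} [S_i on leg i] · R̄_{i,i+1}(1/(w_i w_{i+1}))^{t_i} ⋯ R̄_{i,n+m}(1/(w_i w_{n+m}))^{t_i}, where w = (x₁,…,x_n,y₁,…,y_m), decomposes as S_{[n+m]}(x,y) = S_{[n]}^{13}(x) · R̄_{nm}^{12,t}(1/xy) · S_{[m]}^{23}(y), where R̄_{nm}^{12,t}(1/xy) = →∏_{i=1..n} →∏_{j=n+1..n+m} R̄_{ij}(1/(x_i y_{j−n}))^{t_i}, S_{[n]}^{13}(x) is the analogous ordered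 product built from S₁,…,S_n on legs 1,…,n with parameters x, and S_{[m]}^{23}(y) the one built from S_{n+1},…,S_{n+m} on legs n+1,…,n+m with parameters y. -/
set_option maxHeartbeats 1000000
set_option synthInstance.maxHeartbeats 400000

/-- The image of a two-leg matrix with scalar entries in a (central) subfield `F`
inside matrices over an `F`-algebra `B`. -/
def scal {N : ℕ} {F B : Type*} [Field F] [Ring B] [Algebra F B]
    (M : Matrix (Fin N × Fin N) (Fin N × Fin N) F) :
    Matrix (Fin N × Fin N) (Fin N × Fin N) B :=
  M.map (algebraMap F B)

/-- Copy of a one-leg operator `S` placed on leg `i` of `M_N(B)^{⊗nm}`. -/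
def leg1 {N : ℕ} (nm : ℕ) {B : Type*} [Ring B]
    (M : Matrix (Fin N) (Fin N) B) (i : Fin nm) :
    Matrix (Fin nm → Fin N) (Fin nm → Fin N) B := fun p r =>
  M (p i) (r i) * (if ∀ k ∈ Finset.univ \ {i}, p k = r k then (1 : B) else 0)

/-- Copy of `M^{t_i}` (partial transpose on the first leg) placed on legs `i`, `j`
of `M_N(B)^{⊗nm}`. -/
def leg2t {N : ℕ} (nm : ℕ) {B : Type*} [Ring B]
    (M : Matrix (Fin N × Fin N) (Fin N × Fin N) B) (i j : Fin nm) :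
    Matrix (Fin nm → Fin N) (Fin nm → Fin N) B := fun p r =>
  M (r i, p j) (p i, r j) *
    (if ∀ k ∈ Finset.univ \ {i, j}, p k = r k then (1 : B) else 0)

/-- The rational function field in `nm` variables over `K`. -/
abbrev FG (nm : ℕ) (K : Type*) [Field K] : Type _ :=
  FractionRing (MvPolynomial (Fin nm) K)


section Aux


theorem finRange_split (n m : ℕ) :
    List.finRange (n + m) =
      ((List.finRange n).map (Fin.castAdd m)) ++ ((List.finRange m).map (Fin.natAdd n)) := by
  apply List.ext_getElem
  · simp
  · intro i h1 h2
    simp only [List.getElem_finRange, List.getElem_append, List.getElem_map,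
      List.length_map, List.length_finRange]
    split
    · next h => apply Fin.ext; simp [Fin.val_cast_of_lt]
    · next h =>
      apply Fin.ext
      simp only [Fin.coe_natAdd, List.getElem_finRange, Fin.coe_cast]
      simp at h1 ⊢
      omega

theorem filter_natAdd (n m : ℕ) (j : Fin m) :
    (List.finRange (n + m)).filter (fun l => decide (Fin.natAdd n j < l)) =
      ((List.finRange m).filter (fun l => decide (j < l))).map (Fin.natAdd n) := by
  rw [finRange_split, List.filter_append, List.filter_map, List.filter_map]
  have h1 : (List.finRange n).filter ((fun l => decide (Fin.natAdd n j < l)) ∘ Fin.castAdd m)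
      = [] := by
    apply List.filter_eq_nil_iff.mpr
    intro a _
    simp only [Function.comp_apply, decide_eq_true_eq, Fin.lt_def, Fin.coe_natAdd,
      Fin.coe_castAdd]
    omega
  have h2 : ((fun l => decide (Fin.natAdd n j < l)) ∘ Fin.natAdd n)
      = fun l : Fin m => decide (j < l) := by
    funext l
    simp only [Function.comp_apply, decide_eq_decide, Fin.lt_def, Fin.coe_natAdd]
    omega
  rw [h1, h2]; simp

theorem filter_castAdd (n m : ℕ) (i : Fin n) :
    (List.finRange (n + m)).filter (fun l => decide (Fin.castAdd m i < l)) =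
      ((List.finRange n).filter (fun j => decide (i < j))).map (Fin.castAdd m)
        ++ (List.finRange m).map (Fin.natAdd n) := by
  rw [finRange_split, List.filter_append, List.filter_map, List.filter_map]
  have h1 : ((fun l => decide (Fin.castAdd m i < l)) ∘ Fin.castAdd m)
      = fun j : Fin n => decide (i < j) := by
    funext l
    simp only [Function.comp_apply, decide_eq_decide, Fin.lt_def, Fin.coe_castAdd]
  have h2 : (List.finRange m).filter ((fun l => decide (Fin.castAdd m i < l)) ∘ Fin.natAdd n)
      = List.finRange m := by
    apply List.filter_eq_self.mpr
    intro a _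
    simp only [Function.comp_apply, decide_eq_true_eq, Fin.lt_def, Fin.coe_natAdd,
      Fin.coe_castAdd]
    omega
  rw [h1, h2]


open Classical in
/-- A matrix on `nm` tensor legs is supported on the set of legs `s`. -/
def LegSupp {N nm : ℕ} {B : Type*} [Ring B] (s : Fin nm → Prop)
    (P : Matrix (Fin nm → Fin N) (Fin nm → Fin N) B) : Prop :=
  (∀ p r : Fin nm → Fin N, (∃ k, ¬ s k ∧ p k ≠ r k) → P p r = 0) ∧
  (∀ p r p' r' : Fin nm → Fin N, (∀ k, s k → p k = p' k) → (∀ k, s k → r k = r' k) →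
     (∀ k, ¬ s k → p k = r k) → (∀ k, ¬ s k → p' k = r' k) → P p r = P p' r')

open Classical in
theorem comm_of_disjoint {N nm : ℕ} {B : Type*} [Ring B] {s t : Fin nm → Prop}
    {P Q : Matrix (Fin nm → Fin N) (Fin nm → Fin N) B}
    (hPs : LegSupp s P) (hQt : LegSupp t Q) (hdisj : ∀ k, s k → t k → False)
    (hc : ∀ p r p' r', Commute (P p r) (Q p' r')) : Commute P Q := by
  obtain ⟨hP0, hPc⟩ := hPs
  obtain ⟨hQ0, hQc⟩ := hQt
  show P * Q = Q * P
  ext p r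
  rw [Matrix.mul_apply, Matrix.mul_apply]
  set u₀ : Fin nm → Fin N := fun k => if s k then r k else p k with hu₀
  set v₀ : Fin nm → Fin N := fun k => if t k then r k else p k with hv₀
  have hL : ∑ u : Fin nm → Fin N, P p u * Q u r = P p u₀ * Q u₀ r := by
    apply Finset.sum_eq_single u₀
    · intro u _ hu
      by_cases h1 : ∃ k, ¬ s k ∧ p k ≠ u k
      · obtain ⟨k, hk1, hk2⟩ := h1
        rw [hP0 p u ⟨k, hk1, hk2⟩, zero_mul]
      by_cases h2 : ∃ k, ¬ t k ∧ u k ≠ r k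
      · obtain ⟨k, hk1, hk2⟩ := h2
        rw [hQ0 u r ⟨k, hk1, hk2⟩, mul_zero]
      exfalso
      push_neg at h1 h2
      apply hu
      funext k
      by_cases hsk : s k
      · rw [hu₀]; simp only [hsk, if_true]
        exact h2 k (fun htk => hdisj k hsk htk)
      · rw [hu₀]; simp only [hsk, if_false]
        exact (h1 k hsk).symm
    · intro h; exact absurd (Finset.mem_univ u₀) h
  have hR : ∑ u : Fin nm → Fin N, Q p u * P u r = Q p v₀ * P v₀ r := by
    apply Finset.sum_eq_single v₀
    · intro u _ hu
      by_cases h1 : ∃ k, ¬ t k ∧ p k ≠ u k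
      · obtain ⟨k, hk1, hk2⟩ := h1
        rw [hQ0 p u ⟨k, hk1, hk2⟩, zero_mul]
      by_cases h2 : ∃ k, ¬ s k ∧ u k ≠ r k
      · obtain ⟨k, hk1, hk2⟩ := h2
        rw [hP0 u r ⟨k, hk1, hk2⟩, mul_zero]
      exfalso
      push_neg at h1 h2
      apply hu
      funext k
      by_cases htk : t k
      · rw [hv₀]; simp only [htk, if_true]
        exact h2 k (fun hsk => hdisj k hsk htk)
      · rw [hv₀]; simp only [htk, if_false]
        exact (h1 k htk).symm
    · intro h; exact absurd (Finset.mem_univ v₀) h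
  rw [hL, hR]
  by_cases hmain : ∀ k, ¬ s k → ¬ t k → p k = r k
  · have e1 : P p u₀ = P v₀ r := by
      apply hPc
      · intro k hsk
        rw [hv₀]; simp only [if_neg (fun htk => hdisj k hsk htk)]
      · intro k hsk
        rw [hu₀]; simp only [hsk, if_true]
      · intro k hsk
        rw [hu₀]; simp only [hsk, if_false]
      · intro k hsk
        rw [hv₀]
        by_cases htk : t k
        · simp only [htk, if_true]
        · simp only [htk, if_false]; exact hmain k hsk htk
    have e2 : Q u₀ r = Q p v₀ := by
      apply hQc
      · intro k htk
        rw [hu₀]; simp only [if_neg (fun hsk => hdisj k hsk htk)]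
      · intro k htk
        rw [hv₀]; simp only [htk, if_true]
      · intro k htk
        rw [hu₀]
        by_cases hsk : s k
        · simp only [hsk, if_true]
        · simp only [hsk, if_false]; exact hmain k hsk htk
      · intro k htk
        rw [hv₀]; simp only [htk, if_false]
    rw [e1, e2, ← (hc v₀ r p v₀).eq]
  · push_neg at hmain
    obtain ⟨k, hsk, htk, hpr⟩ := hmain
    have e1 : Q u₀ r = 0 := by
      apply hQ0
      exact ⟨k, htk, by rw [hu₀]; simp only [hsk, if_false]; exact hpr⟩
    have e2 : P v₀ r = 0 := by
      apply hP0
      exact ⟨k, hsk, by rw [hv₀]; simp only [htk, if_false]; exact hpr⟩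
    rw [e1, e2, mul_zero, mul_zero]

theorem leg1_supp {N nm : ℕ} {B : Type*} [Ring B] (M : Matrix (Fin N) (Fin N) B)
    (i : Fin nm) : LegSupp (· = i) (leg1 nm M i) := by
  constructor
  · intro p r ⟨k, hk1, hk2⟩
    unfold leg1
    rw [if_neg, mul_zero]
    intro h
    exact hk2 (h k (by simp [hk1]))
  · intro p r p' r' h1 h2 h3 h4
    unfold leg1
    have hp : p i = p' i := h1 i rfl
    have hr : r i = r' i := h2 i rfl
    rw [hp, hr]
    congr 1
    have : (∀ k ∈ Finset.univ \ {i}, p k = r k) ↔ (∀ k ∈ Finset.univ \ {i}, p' k = r' k) := by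
      constructor <;> intro _ k hk <;> simp only [Finset.mem_sdiff, Finset.mem_univ,
        Finset.mem_singleton, true_and] at hk
      · exact h4 k hk
      · exact h3 k hk
    simp only [this]

theorem leg2t_supp {N nm : ℕ} {B : Type*} [Ring B]
    (M : Matrix (Fin N × Fin N) (Fin N × Fin N) B) (i j : Fin nm) :
    LegSupp (fun k => k = i ∨ k = j) (leg2t nm M i j) := by
  constructor
  · intro p r ⟨k, hk1, hk2⟩
    unfold leg2t
    rw [if_neg, mul_zero]
    intro h
    rw [not_or] at hk1
    exact hk2 (h k (by simp [hk1.1, hk1.2]))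
  · intro p r p' r' h1 h2 h3 h4
    unfold leg2t
    rw [h1 i (Or.inl rfl), h1 j (Or.inr rfl), h2 i (Or.inl rfl), h2 j (Or.inr rfl)]
    congr 1
    have : (∀ k ∈ Finset.univ \ ({i, j} : Finset (Fin nm)), p k = r k) ↔
        (∀ k ∈ Finset.univ \ ({i, j} : Finset (Fin nm)), p' k = r' k) := by
      constructor <;> intro _ k hk <;> simp only [Finset.mem_sdiff, Finset.mem_univ,
        Finset.mem_insert, Finset.mem_singleton, true_and, not_or] at hk
      · exact h4 k (by tauto)
      · exact h3 k (by tauto)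
    simp only [this]

theorem leg2t_scal_comm {N nm : ℕ} {F B : Type*} [Field F] [Ring B] [Algebra F B]
    (M : Matrix (Fin N × Fin N) (Fin N × Fin N) F) (i j : Fin nm)
    (p r : Fin nm → Fin N) (x : B) : Commute (leg2t nm (scal M) i j p r) x := by
  unfold leg2t scal
  simp only [Matrix.map_apply]
  split
  · rw [mul_one]
    exact (Algebra.commutes _ _)
  · rw [mul_zero]
    exact Commute.zero_left x

theorem prod_interchange {M : Type*} [Monoid M] (L : List (M × M))
    (h : L.Pairwise fun a b => Commute a.2 b.1) :
    (L.map fun p => p.1 * p.2).prod = (L.map Prod.fst).prod * (L.map Prod.snd).prod := by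
  induction L with
  | nil => simp
  | cons a L ih =>
    rcases List.pairwise_cons.mp h with ⟨h1, h2⟩
    have hcomm : Commute a.2 (L.map Prod.fst).prod := by
      apply Commute.list_prod_right
      intro x hx
      rcases List.mem_map.mp hx with ⟨b, hb, rfl⟩
      exact h1 b hb
    simp only [List.map_cons, List.prod_cons, ih h2]
    rw [← mul_assoc, mul_assoc a.1, hcomm.eq, ← mul_assoc, mul_assoc]

end Aux

/-- For arbitrary matrices `S₁, …, S_{n+m}` over an `F`-algebra `B`,
`F = K(x₁,…,x_n,y₁,…,y_m)`, the ordered product `S_{[n+m]}(x,y)` decomposes as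
`S_{[n+m]}(x,y) = S_{[n]}^{13}(x) · R̄_{nm}^{12,t}(1/xy) · S_{[m]}^{23}(y)`. -/
theorem S_product_decomposition
    (N n m : ℕ) (hN : 2 ≤ N) (hn : 1 ≤ n) (hm : 1 ≤ m)
    (K : Type*) [Field K] (q : K) (hq : q ≠ 0)
    (B : Type*) [Ring B] [Algebra (FG (n + m) K) B]
    (S : Fin (n + m) → Matrix (Fin N) (Fin N) B)
    (w : Fin (n + m) → FG (n + m) K)
    (hw : ∀ k, w k = algebraMap (MvPolynomial (Fin (n + m)) K) (FG (n + m) K)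
      (MvPolynomial.X k))
    (qi : FG (n + m) K)
    (hqi : qi = (algebraMap (MvPolynomial (Fin (n + m)) K) (FG (n + m) K)
      (MvPolynomial.C q))⁻¹) :
    let Stot : Matrix (Fin (n + m) → Fin N) (Fin (n + m) → Fin N) B :=
      ((List.finRange (n + m)).map fun i =>
        leg1 (n + m) (S i) i *
        (((List.finRange (n + m)).filter fun l => decide (i < l)).map fun l =>
          leg2t (n + m) (scal (Rbar N qi (1 / (w i * w l)))) i l).prod).prod
    let Rnm12t : Matrix (Fin (n + m) → Fin N) (Fin (n + m) → Fin N) B :=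
      ((List.finRange n).map fun i =>
        ((List.finRange m).map fun j =>
          leg2t (n + m) (scal (Rbar N qi (1 / (w (Fin.castAdd m i) * w (Fin.natAdd n j)))))
            (Fin.castAdd m i) (Fin.natAdd n j)).prod).prod
    let Sn13 : Matrix (Fin (n + m) → Fin N) (Fin (n + m) → Fin N) B :=
      ((List.finRange n).map fun i =>
        leg1 (n + m) (S (Fin.castAdd m i)) (Fin.castAdd m i) *
        (((List.finRange n).filter fun j => decide (i < j)).map fun j =>
          leg2t (n + m) (scal (Rbar N qi (1 / (w (Fin.castAdd m i) * w (Fin.castAdd m j)))))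
            (Fin.castAdd m i) (Fin.castAdd m j)).prod).prod
    let Sm23 : Matrix (Fin (n + m) → Fin N) (Fin (n + m) → Fin N) B :=
      ((List.finRange m).map fun j =>
        leg1 (n + m) (S (Fin.natAdd n j)) (Fin.natAdd n j) *
        (((List.finRange m).filter fun l => decide (j < l)).map fun l =>
          leg2t (n + m) (scal (Rbar N qi (1 / (w (Fin.natAdd n j) * w (Fin.natAdd n l)))))
            (Fin.natAdd n j) (Fin.natAdd n l)).prod).prod
    Stot = Sn13 * Rnm12t * Sm23 := by
  intro Stot Rnm12t Sn13 Sm23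
  -- abbreviations (definitionally transparent)
  let A : Fin n → Matrix (Fin (n + m) → Fin N) (Fin (n + m) → Fin N) B := fun i =>
    leg1 (n + m) (S (Fin.castAdd m i)) (Fin.castAdd m i) *
      (((List.finRange n).filter fun j => decide (i < j)).map fun j =>
        leg2t (n + m) (scal (Rbar N qi (1 / (w (Fin.castAdd m i) * w (Fin.castAdd m j)))))
          (Fin.castAdd m i) (Fin.castAdd m j)).prod
  let C : Fin n → Matrix (Fin (n + m) → Fin N) (Fin (n + m) → Fin N) B := fun i =>
    ((List.finRange m).map fun j =>
      leg2t (n + m) (scal (Rbar N qi (1 / (w (Fin.castAdd m i) * w (Fin.natAdd n j)))))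
        (Fin.castAdd m i) (Fin.natAdd n j)).prod
  let D : Fin m → Matrix (Fin (n + m) → Fin N) (Fin (n + m) → Fin N) B := fun j =>
    leg1 (n + m) (S (Fin.natAdd n j)) (Fin.natAdd n j) *
      (((List.finRange m).filter fun l => decide (j < l)).map fun l =>
        leg2t (n + m) (scal (Rbar N qi (1 / (w (Fin.natAdd n j) * w (Fin.natAdd n l)))))
          (Fin.natAdd n j) (Fin.natAdd n l)).prod
  let Ffun : Fin (n + m) → Matrix (Fin (n + m) → Fin N) (Fin (n + m) → Fin N) B := fun i =>
    leg1 (n + m) (S i) i *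
      (((List.finRange (n + m)).filter fun l => decide (i < l)).map fun l =>
        leg2t (n + m) (scal (Rbar N qi (1 / (w i * w l)))) i l).prod
  have hgoal :
      ((List.finRange (n + m)).map Ffun).prod =
        ((List.finRange n).map A).prod * ((List.finRange n).map C).prod *
          ((List.finRange m).map D).prod := by
    rw [finRange_split n m, List.map_append, List.prod_append, List.map_map, List.map_map]
    -- second block equals ∏ D
    have h2 : (List.finRange m).map (Ffun ∘ Fin.natAdd n) = (List.finRange m).map D := by
      apply List.map_congr_left
      intro j _
      show Ffun (Fin.natAdd n j) = D j
      show leg1 (n + m) (S (Fin.natAdd n j)) (Fin.natAdd n j) *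
          (((List.finRange (n + m)).filter fun l => decide (Fin.natAdd n j < l)).map fun l =>
            leg2t (n + m) (scal (Rbar N qi (1 / (w (Fin.natAdd n j) * w l))))
              (Fin.natAdd n j) l).prod = D j
      rw [filter_natAdd, List.map_map]
      rfl
    -- first block factors
    have h1 : (List.finRange n).map (Ffun ∘ Fin.castAdd m)
        = (List.finRange n).map (fun i => A i * C i) := by
      apply List.map_congr_left
      intro i _
      show Ffun (Fin.castAdd m i) = A i * C i
      show leg1 (n + m) (S (Fin.castAdd m i)) (Fin.castAdd m i) *
          (((List.finRange (n + m)).filter fun l => decide (Fin.castAdd m i < l)).map fun l =>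
            leg2t (n + m) (scal (Rbar N qi (1 / (w (Fin.castAdd m i) * w l))))
              (Fin.castAdd m i) l).prod = A i * C i
      rw [filter_castAdd, List.map_append, List.prod_append, List.map_map, List.map_map,
        ← mul_assoc]
      rfl
    rw [h1, h2]
    congr 1
    -- interchange: ∏ (Aᵢ Cᵢ) = ∏ A ∏ C
    have hcom : ∀ i i' : Fin n, i < i' → Commute (C i) (A i') := by
      intro i i' hii
      have hii' : (i : ℕ) < (i' : ℕ) := hii
      apply Commute.list_prod_left
      intro X hX
      rcases List.mem_map.mp hX with ⟨l, _, rfl⟩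
      apply Commute.mul_right
      · refine comm_of_disjoint (leg2t_supp _ _ _) (leg1_supp _ _) ?_ ?_
        · intro k hs ht
          have hi' : (i' : ℕ) < n := i'.isLt
          rcases hs with rfl | rfl
          · have := congrArg Fin.val ht
            simp only [Fin.coe_castAdd] at this
            omega
          · have := congrArg Fin.val ht
            simp only [Fin.coe_castAdd, Fin.coe_natAdd] at this
            omega
        · intro p r p' r'
          exact leg2t_scal_comm _ _ _ p r _
      · apply Commute.list_prod_right
        intro Y hY
        rcases List.mem_map.mp hY with ⟨j', hj', rfl⟩
        have hij' : (i : ℕ) < (j' : ℕ) := by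
          have h := (List.mem_filter.mp hj').2
          have : i' < j' := of_decide_eq_true h
          have : (i' : ℕ) < (j' : ℕ) := this
          omega
        refine comm_of_disjoint (leg2t_supp _ _ _) (leg2t_supp _ _ _) ?_ ?_
        · intro k hs ht
          have hi' : (i' : ℕ) < n := i'.isLt
          have hj'2 : (j' : ℕ) < n := j'.isLt
          rcases hs with rfl | rfl <;> rcases ht with h | h <;>
            · have := congrArg Fin.val h
              simp only [Fin.coe_castAdd, Fin.coe_natAdd] at this
              omega
        · intro p r p' r'
          exact leg2t_scal_comm _ _ _ p r _
    -- package as pairs and apply prod_interchange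
    have hpair : ((List.finRange n).map fun i => (A i, C i)).Pairwise
        (fun a b => Commute a.2 b.1) := by
      rw [List.pairwise_map]
      exact (List.pairwise_lt_finRange n).imp (fun h => hcom _ _ h)
    have := prod_interchange ((List.finRange n).map fun i => (A i, C i)) hpair
    rw [List.map_map, List.map_map, List.map_map] at this
    exact this
  exact hgoal
end
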